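/- Let ξ₁, ξ₂ be nonzero quaternions. Identifying purely imaginary quaternions with ℝ³, the equalities −(ξ₁*·k·ξ₁)/4 = −(ξ₂*·k·ξ₂)/4 and (ξ₁*·j·ξ₁)/|ξ₁|² = (ξ₂*·j·ξ₂)/|ξ₂|² hold simultaneously if and only if ξ₂ = ξ₁ or ξ₂ = −ξ₁. -/

import Mathlib

open scoped Quaternion

/-- The quaternion `j`. -/
def qj : ℍ[ℝ] := ⟨0, 0, 1, 0⟩

/-- The quaternion `k`. -/
def qk : ℍ[ℝ] := ⟨0, 0, 0, 1⟩

/-- The identification of purely imaginary quaternions with `ℝ³`: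
`xi + yj + zk ↔ (x, y, z)`. -/
noncomputable def imVec (ξ : ℍ[ℝ]) : EuclideanSpace ℝ (Fin 3) := WithLp.toLp 2 ![ξ.imI, ξ.imJ, ξ.imK]

/-!
The first components agree iff `ξ₁* k ξ₁ = ξ₂* k ξ₂`, which forces `|ξ₁| = |ξ₂|`; the second
components then agree iff `ξ₁* j ξ₁ = ξ₂* j ξ₂`. For `ξ ≠ 0` we have `ξ* = |ξ|² ξ⁻¹`, so with equal
norms both equations say that `ξ₁ ξ₂⁻¹` commutes with `j` and `k`. Such a quaternion is real, and
comparing norms it is `±1`.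
-/

theorem commute_mul_inv_of_inv_mul_mul_eq {G₀ : Type*} [GroupWithZero G₀] {a b q : G₀}
    (ha : a ≠ 0) (hb : b ≠ 0) (h : a⁻¹ * q * a = b⁻¹ * q * b) : Commute q (a * b⁻¹) :=
  calc q * (a * b⁻¹) = a * (a⁻¹ * q * a) * b⁻¹ := by simp [mul_assoc, ha]
    _ = a * b⁻¹ * q := by rw [h]; simp [mul_assoc, hb]

namespace Quaternion

theorem re_star_mul_mul_self (a q : ℍ[ℝ]) : (star a * q * a).re = normSq a * q.re := by
  simp only [re_mul, re_star, imI_star, imJ_star, imK_star, imI_mul, imJ_mul, imK_mul, normSq_def']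
  ring

theorem star_eq_coe_normSq_mul_inv (a : ℍ[ℝ]) : star a = normSq a * a⁻¹ := by
  rcases eq_or_ne a 0 with rfl | ha
  · simp
  · rw [inv_def, mul_smul_comm, ← coe_mul_eq_smul, ← mul_assoc, ← coe_mul,
      inv_mul_cancel₀ (normSq_ne_zero.2 ha), coe_one, one_mul]

theorem normSq_eq_of_star_mul_mul_eq {a b q : ℍ[ℝ]} (hq : q ≠ 0)
    (h : star a * q * a = star b * q * b) : normSq a = normSq b := by
  have h' : normSq a ^ 2 * normSq q = normSq b ^ 2 * normSq q := by
    simpa [normSq_star, sq, mul_comm, mul_left_comm] using congrArg normSq h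
  exact (sq_eq_sq₀ normSq_nonneg normSq_nonneg).1 (mul_right_cancel₀ (normSq_ne_zero.2 hq) h')

theorem commute_mul_inv_of_star_mul_mul_eq {a b q : ℍ[ℝ]} (ha : a ≠ 0) (hb : b ≠ 0)
    (hN : normSq a = normSq b) (h : star a * q * a = star b * q * b) : Commute q (a * b⁻¹) := by
  have hN0 : ((normSq a : ℝ) : ℍ[ℝ]) ≠ 0 := coe_injective.ne (normSq_ne_zero.2 ha)
  rw [star_eq_coe_normSq_mul_inv, star_eq_coe_normSq_mul_inv, ← hN] at h
  simp only [mul_assoc] at h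
  exact commute_mul_inv_of_inv_mul_mul_eq ha hb
    (by simpa only [mul_assoc] using mul_left_cancel₀ hN0 h)

end Quaternion

open Quaternion

theorem qk_ne_zero : qk ≠ 0 := by rw [Ne, Quaternion.ext_iff]; simp [qk]

theorem eq_coe_re_of_commute_qj_of_commute_qk {η : ℍ[ℝ]} (hj : Commute qj η)
    (hk : Commute qk η) : η = η.re := by
  have hj' := hj.eq
  have hk' := hk.eq
  simp only [Quaternion.ext_iff, re_mul, imI_mul, imJ_mul, imK_mul] at hj' hk'
  simp only [qj, qk, zero_mul, mul_zero, one_mul, mul_one, sub_self, zero_sub, sub_zero, add_zero,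
    zero_add, true_and, and_true] at hj' hk'
  ext <;> simp <;> linarith

theorem eq_or_eq_neg_of_star_mul_mul_eq {a b : ℍ[ℝ]}
    (hj : star a * qj * a = star b * qj * b) (hk : star a * qk * a = star b * qk * b) :
    b = a ∨ b = -a := by
  have hN := normSq_eq_of_star_mul_mul_eq qk_ne_zero hk
  rcases eq_or_ne b 0 with rfl | hb
  · exact .inl (normSq_eq_zero.1 (by simpa using hN)).symm
  have ha : a ≠ 0 := by rwa [← normSq_ne_zero, hN, normSq_ne_zero]
  set c := (a * b⁻¹).re
  have hc : a = c * b := by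
    rw [← eq_coe_re_of_commute_qj_of_commute_qk (commute_mul_inv_of_star_mul_mul_eq ha hb hN hj)
      (commute_mul_inv_of_star_mul_mul_eq ha hb hN hk), inv_mul_cancel_right₀ hb]
  have hc_sq : c ^ 2 = 1 := by
    have h := congrArg normSq hc
    rw [map_mul, normSq_coe, ← hN] at h
    exact mul_right_cancel₀ (normSq_ne_zero.2 ha) (by simpa using h.symm)
  rcases sq_eq_one_iff.1 hc_sq with h | h <;> simp [hc, h]

theorem eq_of_re_eq_of_imVec_eq {a b : ℍ[ℝ]} (hre : a.re = b.re) (h : imVec a = imVec b) :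
    a = b := by
  simp only [imVec, WithLp.toLp.injEq, Matrix.vecCons_inj, and_true] at h
  exact ext _ _ hre h.1 h.2.1 h.2.2

theorem quaternion_phi_one_two_to_one_general (ξ₁ ξ₂ : ℍ[ℝ]) :
    ((-(1 : ℝ) / 4) • imVec (star ξ₁ * qk * ξ₁) = (-(1 : ℝ) / 4) • imVec (star ξ₂ * qk * ξ₂) ∧
      (‖ξ₁‖ ^ 2)⁻¹ • imVec (star ξ₁ * qj * ξ₁) = (‖ξ₂‖ ^ 2)⁻¹ • imVec (star ξ₂ * qj * ξ₂)) ↔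
    (ξ₂ = ξ₁ ∨ ξ₂ = -ξ₁) := by
  constructor
  · rintro ⟨H1, H2⟩
    have hk : star ξ₁ * qk * ξ₁ = star ξ₂ * qk * ξ₂ :=
      eq_of_re_eq_of_imVec_eq (by rw [re_star_mul_mul_self, re_star_mul_mul_self]; simp [qk])
        (smul_right_injective _ (by norm_num) H1)
    have hN := normSq_eq_of_star_mul_mul_eq qk_ne_zero hk
    rcases eq_or_ne ξ₂ 0 with rfl | h₂
    · exact .inl (normSq_eq_zero.1 (by simpa using hN)).symm
    have hnorm : ‖ξ₁‖ = ‖ξ₂‖ := by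
      rwa [normSq_eq_norm_mul_self, normSq_eq_norm_mul_self,
        mul_self_inj (norm_nonneg _) (norm_nonneg _)] at hN
    rw [hnorm] at H2
    have hj : star ξ₁ * qj * ξ₁ = star ξ₂ * qj * ξ₂ :=
      eq_of_re_eq_of_imVec_eq (by rw [re_star_mul_mul_self, re_star_mul_mul_self]; simp [qj])
        (smul_right_injective _ (by simpa using h₂) H2)
    exact eq_or_eq_neg_of_star_mul_mul_eq hj hk
  · rintro (rfl | rfl) <;> simp

/-- The two-to-one property of the map `φ₁(ξ) = (−(ξ*kξ)/4, (ξ*jξ)/|ξ|²)` from Lemma 2.2: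
for nonzero quaternions `ξ₁, ξ₂`, one has `φ₁(ξ₁) = φ₁(ξ₂)` if and only if `ξ₂ = ±ξ₁`. -/
theorem quaternion_phi_one_two_to_one (ξ₁ ξ₂ : ℍ[ℝ]) (h₁ : ξ₁ ≠ 0) (h₂ : ξ₂ ≠ 0) :
    ((-(1 : ℝ) / 4) • imVec (star ξ₁ * qk * ξ₁) = (-(1 : ℝ) / 4) • imVec (star ξ₂ * qk * ξ₂) ∧
      (‖ξ₁‖ ^ 2)⁻¹ • imVec (star ξ₁ * qj * ξ₁) = (‖ξ₂‖ ^ 2)⁻¹ • imVec (star ξ₂ * qj * ξ₂)) ↔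
    (ξ₂ = ξ₁ ∨ ξ₂ = -ξ₁) :=
  quaternion_phi_one_two_to_one_general ξ₁ ξ₂
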